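/- For r, u ∈ ℝ² with u ≠ 0 and ⟨r,u⟩ < 0, and combined radius R with ‖r‖ > R: a collision time t ≥ 0 with ‖r + t·u‖ ≤ R exists if and only if the predicted minimum distance dmin = √(‖r‖² - ⟨r,u⟩²/‖u‖²) satisfies dmin ≤ R. -/

import Mathlib

open scoped RealInnerProductSpace

section CompletingTheSquare

variable {E : Type*} [NormedAddCommGroup E] [InnerProductSpace ℝ E] {r u : E}

theorem norm_add_smul_sq_eq_of_ne_zero (hu : u ≠ 0) (t : ℝ) :
    ‖r + t • u‖ ^ 2 =
      ‖r‖ ^ 2 - ⟪r, u⟫ ^ 2 / ‖u‖ ^ 2 + (t + ⟪r, u⟫ / ‖u‖ ^ 2) ^ 2 * ‖u‖ ^ 2 := by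
  have hu2 : ‖u‖ ^ 2 ≠ 0 := pow_ne_zero 2 (norm_ne_zero_iff.2 hu)
  rw [norm_add_sq_real, real_inner_smul_right, norm_smul, Real.norm_eq_abs, mul_pow, sq_abs]
  field_simp
  ring

theorem exists_nonneg_norm_add_smul_le_iff (hu : u ≠ 0) (hru : ⟪r, u⟫ ≤ 0) (R : ℝ) :
    (∃ t : ℝ, 0 ≤ t ∧ ‖r + t • u‖ ≤ R) ↔
      Real.sqrt (‖r‖ ^ 2 - ⟪r, u⟫ ^ 2 / ‖u‖ ^ 2) ≤ R := by
  have hsq := norm_add_smul_sq_eq_of_ne_zero (r := r) hu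
  constructor
  · rintro ⟨t, -, ht⟩
    calc Real.sqrt (‖r‖ ^ 2 - ⟪r, u⟫ ^ 2 / ‖u‖ ^ 2)
        ≤ Real.sqrt (‖r + t • u‖ ^ 2) :=
          Real.sqrt_le_sqrt (hsq t ▸ le_add_of_nonneg_right (by positivity))
      _ = ‖r + t • u‖ := Real.sqrt_sq (norm_nonneg _)
      _ ≤ R := ht
  · intro h
    refine ⟨-⟪r, u⟫ / ‖u‖ ^ 2, div_nonneg (neg_nonneg.2 hru) (sq_nonneg _), ?_⟩
    rwa [← Real.sqrt_sq (norm_nonneg (r + _)), hsq, neg_div, neg_add_cancel, zero_pow two_ne_zero,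
      zero_mul, add_zero]

end CompletingTheSquare

theorem collision_iff_dmin_le_general
    (r u : EuclideanSpace ℝ (Fin 2)) (R : ℝ)
    (hu : u ≠ 0) (hru : ⟪r, u⟫ < 0) :
    (∃ t : ℝ, 0 ≤ t ∧ ‖r + t • u‖ ≤ R) ↔
      Real.sqrt (‖r‖ ^ 2 - ⟪r, u⟫ ^ 2 / ‖u‖ ^ 2) ≤ R :=
  exists_nonneg_norm_add_smul_le_iff hu hru.le R

/-- For approaching agents (⟨r,u⟩ < 0, u ≠ 0, ‖r‖ > R): a collision time t ≥ 0 with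
‖r + t·u‖ ≤ R exists iff the predicted minimum distance
dmin = √(‖r‖² - ⟨r,u⟩²/‖u‖²) satisfies dmin ≤ R. -/
theorem collision_iff_dmin_le
    (r u : EuclideanSpace ℝ (Fin 2)) (R : ℝ) (hR : 0 < R)
    (hu : u ≠ 0) (hru : ⟪r, u⟫ < 0) (hfar : R < ‖r‖) :
    (∃ t : ℝ, 0 ≤ t ∧ ‖r + t • u‖ ≤ R) ↔
      Real.sqrt (‖r‖ ^ 2 - ⟪r, u⟫ ^ 2 / ‖u‖ ^ 2) ≤ R :=
  collision_iff_dmin_le_general r u R hu hru
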